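/- Two states of a deterministic weak Büchi automaton that can be merged by language-equivalence minimization must lie in SCCs of the same Löding rank; equivalently, if states p and q of a DWA recognize the same ω-language, then rank(p) = rank(q), where rank is any function on states constant on SCCs, monotonically non-increasing along transitions, and whose parity at a non-trivial SCC matches the acceptance of that SCC, chosen minimally. -/

import Mathlib

/-- A complete deterministic Büchi automaton over alphabet `A` with states `Q`. -/
structure DBA (Q A : Type) where
  init : Q
  step : Q → A → Q
  F : Set Q

namespace DBA

variable {Q A : Type}

/-- Extension of the transition function to finite words. -/
def stepList (M : DBA Q A) : Q → List A → Q
  | q, [] => q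
  | q, a :: u => M.stepList (M.step q a) u

/-- `q` is reachable from `p`. -/
def Reach (M : DBA Q A) (p q : Q) : Prop := ∃ u : List A, M.stepList p u = q

/-- `p` and `q` are in the same strongly connected component. -/
def SameSCC (M : DBA Q A) (p q : Q) : Prop := M.Reach p q ∧ M.Reach q p

/-- `q` lies on a cycle (i.e. its SCC is non-trivial). -/
def OnCycle (M : DBA Q A) (q : Q) : Prop := ∃ u : List A, u ≠ [] ∧ M.stepList q u = q

/-- Weakness: every SCC is entirely accepting or entirely rejecting. -/
def Weak (M : DBA Q A) : Prop := ∀ p q, M.SameSCC p q → (p ∈ M.F ↔ q ∈ M.F)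

/-- The (unique) run on `w` starting in state `q`. -/
def runFrom (M : DBA Q A) (q : Q) (w : ℕ → A) : ℕ → Q
  | 0 => q
  | n + 1 => M.step (M.runFrom q w n) (w n)

/-- Büchi acceptance from state `q`: the run visits `F` infinitely often. -/
def AcceptsFrom (M : DBA Q A) (q : Q) (w : ℕ → A) : Prop :=
  ∀ N, ∃ n, N ≤ n ∧ M.runFrom q w n ∈ M.F

/-- Büchi acceptance from the initial state. -/
def Accepts (M : DBA Q A) (w : ℕ → A) : Prop := M.AcceptsFrom M.init w

/-- The ω-language of state `q`. -/
def LangFrom (M : DBA Q A) (q : Q) : Set (ℕ → A) := {w | M.AcceptsFrom q w}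

/-- The ω-language of the automaton. -/
def Lang (M : DBA Q A) : Set (ℕ → A) := {w | M.Accepts w}

/-- `q` is an accepting sink. -/
def AcceptingSink (M : DBA Q A) (q : Q) : Prop := q ∈ M.F ∧ ∀ a, M.step q a = q

/-- Minimality: all states are reachable and no two distinct states are
language-equivalent. -/
def Minimal (M : DBA Q A) : Prop :=
  (∀ q, M.Reach M.init q) ∧ ∀ p q, M.LangFrom p = M.LangFrom q → p = q

/-- Product automaton with a chosen acceptance set. -/
def prod (M₁ : DBA Q A) {Q₂ : Type} (M₂ : DBA Q₂ A) (Fp : Set (Q × Q₂)) :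
    DBA (Q × Q₂) A :=
  ⟨(M₁.init, M₂.init), fun q a => (M₁.step q.1 a, M₂.step q.2 a), Fp⟩

/-- A ranking in the sense of Löding: constant on SCCs, non-increasing along
transitions, and with parity matching acceptance on states lying on cycles. -/
def IsRanking (M : DBA Q A) (r : Q → ℕ) : Prop :=
  (∀ p q, M.SameSCC p q → r p = r q) ∧
  (∀ q a, r (M.step q a) ≤ r q) ∧
  (∀ q, M.OnCycle q → (Even (r q) ↔ q ∈ M.F))

end DBA

/-- Recognizability by a (finite) deterministic weak Büchi automaton. -/
def DWARecognizable {A : Type} (L : Set (ℕ → A)) : Prop :=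
  ∃ (Q : Type) (_ : Fintype Q) (M : DBA Q A), M.Weak ∧ ∀ w, M.Accepts w ↔ w ∈ L

/-- Nondeterministic Büchi automata. -/
structure NBA (Q A : Type) where
  init : Set Q
  step : Q → A → Set Q
  F : Set Q

/-- Acceptance for nondeterministic Büchi automata. -/
def NBA.Accepts {Q A : Type} (M : NBA Q A) (w : ℕ → A) : Prop :=
  ∃ r : ℕ → Q, r 0 ∈ M.init ∧ (∀ n, r (n + 1) ∈ M.step (r n) (w n)) ∧
    ∀ N, ∃ n, N ≤ n ∧ r n ∈ M.F

/-- ω-regularity: recognizability by a finite nondeterministic Büchi automaton. -/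
def OmegaRegular {A : Type} (L : Set (ℕ → A)) : Prop :=
  ∃ (Q : Type) (_ : Fintype Q) (M : NBA Q A), ∀ w, M.Accepts w ↔ w ∈ L

/-- Guarantee languages: `W·Σ^ω` for a set `W` of finite words. -/
def IsGuaranteeLang {A : Type} (L : Set (ℕ → A)) : Prop :=
  ∃ W : Set (List A), L = {w | ∃ n : ℕ, (List.ofFn fun i : Fin n => w i) ∈ W}

/-- Safety languages: complements of guarantee languages. -/
def IsSafetyLang {A : Type} (L : Set (ℕ → A)) : Prop := IsGuaranteeLang Lᶜ

/-- Finite Boolean combinations (union, intersection, complement) of a family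
of languages. -/
inductive BoolCombOf {α : Type} (B : Set (Set α)) : Set α → Prop
  | base {L} : L ∈ B → BoolCombOf B L
  | compl {L} : BoolCombOf B L → BoolCombOf B Lᶜ
  | union {L₁ L₂} : BoolCombOf B L₁ → BoolCombOf B L₂ → BoolCombOf B (L₁ ∪ L₂)
  | inter {L₁ L₂} : BoolCombOf B L₁ → BoolCombOf B L₂ → BoolCombOf B (L₁ ∩ L₂)

/-!
Replace each rank by the least rank among language-equivalent states. Language equivalence is
a congruence for the transitions, so the new function is again non-increasing along them. For
the parity condition at a state `p` on a cycle `u`, push a rank-minimal `q ≡ p` along powers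
of `u`: by finiteness it reaches some `s ≡ p` on a cycle `u^c` shared with `p`, and in a weak
automaton the periodic word `(u^c)^ω` is accepted from `s`, resp. `p`, iff that state is
accepting. The new ranking lies below `r`, so minimality makes `r` equal to it, and it depends
only on the language.
-/

open Stream'

theorem Function.exists_isPeriodicPt_iterate {α : Type*} [Finite α] (f : α → α) (x : α) :
    ∃ i c, 0 < c ∧ Function.IsPeriodicPt f c (f^[i] x) := by
  obtain ⟨i, j, hij, h⟩ := Finite.exists_ne_map_eq_of_infinite fun n => f^[n] x
  have key : ∀ i j, i < j → f^[i] x = f^[j] x →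
      ∃ i c, 0 < c ∧ Function.IsPeriodicPt f c (f^[i] x) :=
    fun i j hlt h => ⟨i, j - i, by omega, by
      rw [Function.IsPeriodicPt, Function.IsFixedPt, ← Function.iterate_add_apply,
        Nat.sub_add_cancel hlt.le, ← h]⟩
  rcases Nat.lt_or_gt_of_ne hij with hlt | hlt
  · exact key i j hlt h
  · exact key j i hlt h.symm

namespace DBA

variable {Q A : Type} (M : DBA Q A)

theorem stepList_append (p : Q) (u v : List A) :
    M.stepList p (u ++ v) = M.stepList (M.stepList p u) v := by
  induction u generalizing p with
  | nil => rfl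
  | cons a u ih => exact ih _

theorem stepList_flatten_replicate (p : Q) (u : List A) (n : ℕ) :
    M.stepList p (List.replicate n u).flatten = (fun q => M.stepList q u)^[n] p := by
  induction n generalizing p with
  | zero => rfl
  | succ n ih => rw [List.replicate_succ, List.flatten_cons, stepList_append, ih]; rfl

theorem runFrom_cons_succ (p : Q) (a : A) (w : Stream' A) (n : ℕ) :
    M.runFrom p (a :: w) (n + 1) = M.runFrom (M.step p a) w n := by
  induction n with
  | zero => rfl
  | succ n ih => exact congrArg (M.step · (w n)) ih

theorem runFrom_append_add (p : Q) (u : List A) (w : Stream' A) (n : ℕ) :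
    M.runFrom p (u ++ₛ w) (u.length + n) = M.runFrom (M.stepList p u) w n := by
  induction u generalizing p with
  | nil => rw [List.length_nil, Nat.zero_add]; rfl
  | cons a u ih =>
    rw [cons_append_stream, List.length_cons, Nat.add_right_comm, runFrom_cons_succ, ih]
    rfl

theorem runFrom_eq_stepList_take (p : Q) (w : Stream' A) (n : ℕ) :
    M.runFrom p w n = M.stepList p (w.take n) := by
  have h := M.runFrom_append_add p (w.take n) (w.drop n) 0
  rwa [append_take_drop, length_take] at h

theorem runFrom_add (p : Q) (w : Stream' A) (n m : ℕ) :
    M.runFrom p w (n + m) = M.runFrom (M.runFrom p w n) (w.drop n) m := by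
  have h := M.runFrom_append_add p (w.take n) (w.drop n) m
  rwa [append_take_drop, length_take, ← runFrom_eq_stepList_take] at h

theorem reach_runFrom (p : Q) (w : Stream' A) (n : ℕ) : M.Reach p (M.runFrom p w n) :=
  ⟨w.take n, (M.runFrom_eq_stepList_take p w n).symm⟩

theorem reach_runFrom_of_le (p : Q) (w : Stream' A) {n m : ℕ} (h : n ≤ m) :
    M.Reach (M.runFrom p w n) (M.runFrom p w m) := by
  obtain ⟨k, rfl⟩ := Nat.exists_eq_add_of_le h
  rw [M.runFrom_add p w n k]
  exact M.reach_runFrom _ _ k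

theorem acceptsFrom_append_iff (p : Q) (u : List A) (w : Stream' A) :
    M.AcceptsFrom p (u ++ₛ w) ↔ M.AcceptsFrom (M.stepList p u) w := by
  constructor
  · intro h N
    obtain ⟨n, hn, hF⟩ := h (u.length + N)
    obtain ⟨k, rfl⟩ := Nat.exists_eq_add_of_le (le_of_add_le_left hn)
    exact ⟨k, by omega, by rwa [runFrom_append_add] at hF⟩
  · intro h N
    obtain ⟨n, hn, hF⟩ := h N
    exact ⟨u.length + n, by omega, by rwa [runFrom_append_add]⟩

theorem langFrom_stepList_congr {p q : Q} (h : M.LangFrom p = M.LangFrom q) (u : List A) :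
    M.LangFrom (M.stepList p u) = M.LangFrom (M.stepList q u) := by
  ext w
  change M.AcceptsFrom _ w ↔ M.AcceptsFrom _ w
  exact (M.acceptsFrom_append_iff p u w).symm.trans
    ((Set.ext_iff.1 h _).trans (M.acceptsFrom_append_iff q u w))

section Cycle

variable {M} {u : List A}

theorem runFrom_cycle_mul_length (hu : u ≠ []) {p : Q} (hp : M.stepList p u = p) (k : ℕ) :
    M.runFrom p (cycle u hu) (k * u.length) = p := by
  induction k with
  | zero => rw [Nat.zero_mul]; rfl
  | succ k ih =>
    conv_lhs => rw [Nat.succ_mul, Nat.add_comm, cycle_eq u hu]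
    rw [runFrom_append_add, hp, ih]

theorem acceptsFrom_cycle_iff (hu : u ≠ []) (hw : M.Weak) {p : Q} (hp : M.stepList p u = p) :
    M.AcceptsFrom p (cycle u hu) ↔ p ∈ M.F := by
  have hlen : 0 < u.length := List.length_pos_iff.2 hu
  constructor
  · intro h
    obtain ⟨n, -, hF⟩ := h 0
    have hback : M.Reach (M.runFrom p (cycle u hu) n) p := by
      simpa only [runFrom_cycle_mul_length hu hp] using
        M.reach_runFrom_of_le p (cycle u hu) (Nat.le_mul_of_pos_right n hlen)
    exact (hw _ _ ⟨M.reach_runFrom p _ n, hback⟩).2 hF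
  · intro hF N
    exact ⟨N * u.length, Nat.le_mul_of_pos_right N hlen,
      by rwa [runFrom_cycle_mul_length hu hp]⟩

theorem mem_F_iff_of_langFrom_eq (hu : u ≠ []) (hw : M.Weak) {p q : Q}
    (hL : M.LangFrom p = M.LangFrom q)
    (hp : M.stepList p u = p) (hq : M.stepList q u = q) : p ∈ M.F ↔ q ∈ M.F := by
  rw [← acceptsFrom_cycle_iff hu hw hp, ← acceptsFrom_cycle_iff hu hw hq]
  exact Set.ext_iff.1 hL _

end Cycle

theorem exists_reach_common_cycle [Finite Q] {p q : Q} (hp : M.OnCycle p)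
    (hq : M.LangFrom q = M.LangFrom p) :
    ∃ s, M.Reach q s ∧ M.LangFrom s = M.LangFrom p ∧
      ∃ v ≠ [], M.stepList p v = p ∧ M.stepList s v = s := by
  obtain ⟨u, hu, hpu⟩ := hp
  set g : Q → Q := fun x => M.stepList x u
  have hpg : ∀ n, M.stepList p (List.replicate n u).flatten = p := fun n => by
    rw [stepList_flatten_replicate]; exact Function.iterate_fixed hpu n
  obtain ⟨i, c, hc, hper⟩ := Function.exists_isPeriodicPt_iterate g q
  refine ⟨g^[i] q, ⟨_, M.stepList_flatten_replicate q u i⟩, ?_,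
    (List.replicate c u).flatten, by simp [hu, hc.ne'], hpg c, ?_⟩
  · rw [← stepList_flatten_replicate, M.langFrom_stepList_congr hq, hpg]
  · rw [stepList_flatten_replicate]; exact hper

section Ranking

variable {M} {r : Q → ℕ}

theorem IsRanking.le_of_reach (hr : M.IsRanking r) {p q : Q} (h : M.Reach p q) : r q ≤ r p := by
  obtain ⟨u, rfl⟩ := h
  induction u generalizing p with
  | nil => exact le_rfl
  | cons a u ih => exact ih.trans (hr.2.1 p a)

variable (M r) in
noncomputable def langMinRank (q : Q) : ℕ := sInf (r '' {p | M.LangFrom p = M.LangFrom q})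

theorem langMinRank_le_of_langFrom_eq {p q : Q} (h : M.LangFrom p = M.LangFrom q) :
    M.langMinRank r q ≤ r p :=
  Nat.sInf_le ⟨p, h, rfl⟩

theorem exists_langMinRank_eq (q : Q) :
    ∃ p, M.LangFrom p = M.LangFrom q ∧ r p = M.langMinRank r q :=
  Nat.sInf_mem
    (Set.image_nonempty.2 ⟨q, rfl⟩ : (r '' {p | M.LangFrom p = M.LangFrom q}).Nonempty)

theorem langMinRank_congr {p q : Q} (h : M.LangFrom p = M.LangFrom q) :
    M.langMinRank r p = M.langMinRank r q := by
  simp only [langMinRank, h]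

theorem IsRanking.langMinRank_le_of_reach (hr : M.IsRanking r) {p q : Q} (h : M.Reach p q) :
    M.langMinRank r q ≤ M.langMinRank r p := by
  obtain ⟨s, hs, hrs⟩ := exists_langMinRank_eq (M := M) (r := r) p
  obtain ⟨u, rfl⟩ := h
  calc M.langMinRank r (M.stepList p u) ≤ r (M.stepList s u) :=
        langMinRank_le_of_langFrom_eq (M.langFrom_stepList_congr hs u)
    _ ≤ r s := hr.le_of_reach ⟨u, rfl⟩
    _ = M.langMinRank r p := hrs

theorem IsRanking.isRanking_langMinRank [Finite Q] (hw : M.Weak) (hr : M.IsRanking r) :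
    M.IsRanking (M.langMinRank r) := by
  refine ⟨fun p q h => le_antisymm (hr.langMinRank_le_of_reach h.2)
    (hr.langMinRank_le_of_reach h.1), fun q a => hr.langMinRank_le_of_reach ⟨[a], rfl⟩,
    fun p hp => ?_⟩
  obtain ⟨q, hq, hrq⟩ := exists_langMinRank_eq (M := M) (r := r) p
  obtain ⟨s, hqs, hs, v, hv, hpv, hsv⟩ := M.exists_reach_common_cycle hp hq
  have hrs : r s = M.langMinRank r p :=
    le_antisymm ((hr.le_of_reach hqs).trans hrq.le) (langMinRank_le_of_langFrom_eq hs)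
  rw [← hrs, hr.2.2 s ⟨v, hv, hsv⟩]
  exact mem_F_iff_of_langFrom_eq hv hw hs hsv hpv

end Ranking

end DBA

/-- in a DWA, language-equivalent states have the same minimal
Löding rank: if `r` is a pointwise-minimal ranking (constant on SCCs,
non-increasing along transitions, parity matching acceptance on cycles) and
`p`, `q` recognize the same ω-language, then `r p = r q`. -/
theorem stmt15 {Q A : Type} [Fintype Q] (M : DBA Q A) (hw : M.Weak)
    (r : Q → ℕ) (hr : M.IsRanking r)
    (hmin : ∀ r' : Q → ℕ, M.IsRanking r' → ∀ q, r q ≤ r' q)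
    (p q : Q) (hL : M.LangFrom p = M.LangFrom q) :
    r p = r q := by
  have hr_eq : ∀ x, r x = M.langMinRank r x := fun x =>
    le_antisymm (hmin _ (hr.isRanking_langMinRank hw) x) (DBA.langMinRank_le_of_langFrom_eq rfl)
  rw [hr_eq p, hr_eq q, DBA.langMinRank_congr hL]
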